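/- With ψ and F as in the n-dimensional trial-function setting, ⟨½(n - ζ∑_i y_i)ψ, F⟩ = (n/4)[b₀ - a₀ρλ + a₀²((n+1)ρ²/2 - 1)]. -/

import Mathlib

/-!
On the orthant, `ψ²` is exactly the joint density of independent `X ~ Exp(β)` and
`Y₁, …, Yₙ ~ Exp(ζ)`, so the integral is an expectation of a polynomial in `X`, `S = ∑ Yᵢ` and
`Q = ∑ Yᵢ²`. The `X`-dependence drops out because `E[n - ζS] = 0`, and what remains is a
combination of the moments `E[S], E[S²], E[S³], E[Q], E[SQ]`, each computed by induction on `n`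
by splitting off the first coordinate. Behind the shape of the answer: `n - ζS = ζ ∂_ζ log(ζⁿe^{-ζS})`,
so `E[(n - ζS) h] = -k E[h]` for `h` homogeneous of degree `k`.
-/

open MeasureTheory ProbabilityTheory Real Set
open scoped Nat

def HasIntegral {α : Type*} [MeasurableSpace α] (μ : Measure α) (f : α → ℝ) (c : ℝ) : Prop :=
  Integrable f μ ∧ ∫ x, f x ∂μ = c

namespace HasIntegral

variable {α β : Type*} [MeasurableSpace α] [MeasurableSpace β] {μ : Measure α} {ν : Measure β}
  {f g : α → ℝ} {a b : ℝ}

theorem congr (h : HasIntegral μ f a) (hfg : ∀ x, f x = g x) (hab : a = b) :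
    HasIntegral μ g b := by
  rw [← funext hfg, ← hab]
  exact h

theorem add (hf : HasIntegral μ f a) (hg : HasIntegral μ g b) :
    HasIntegral μ (fun x => f x + g x) (a + b) :=
  ⟨hf.1.add hg.1, by rw [integral_add hf.1 hg.1, hf.2, hg.2]⟩

theorem sub (hf : HasIntegral μ f a) (hg : HasIntegral μ g b) :
    HasIntegral μ (fun x => f x - g x) (a - b) :=
  ⟨hf.1.sub hg.1, by rw [integral_sub hf.1 hg.1, hf.2, hg.2]⟩

theorem const_mul (hf : HasIntegral μ f a) (c : ℝ) :
    HasIntegral μ (fun x => c * f x) (c * a) :=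
  ⟨hf.1.const_mul c, by rw [integral_const_mul, hf.2]⟩

theorem prod_mul [SFinite μ] [SFinite ν] {g : β → ℝ} (hf : HasIntegral μ f a)
    (hg : HasIntegral ν g b) : HasIntegral (μ.prod ν) (fun p => f p.1 * g p.2) (a * b) :=
  ⟨hf.1.mul_prod hg.1, by rw [integral_prod_mul, hf.2, hg.2]⟩

theorem fin_cons_mul {n : ℕ} {f : ℝ → ℝ} {h : (Fin n → ℝ) → ℝ} (hf : HasIntegral volume f a)
    (hh : HasIntegral volume h b) :
    HasIntegral volume (fun y : Fin (n + 1) → ℝ => f (y 0) * h (Fin.tail y)) (a * b) := by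
  have e := volume_preserving_piFinSuccAbove (fun _ : Fin (n + 1) => ℝ) 0
  have hp := hf.prod_mul hh
  rw [← Measure.volume_eq_prod] at hp
  refine ⟨?_, ?_⟩
  · exact (e.integrable_comp_emb (MeasurableEquiv.piFinSuccAbove _ 0).measurableEmbedding).2 hp.1
  · rw [← hp.2, ← e.integral_comp']
    rfl

end HasIntegral

theorem exponentialPDFReal_eq (r x : ℝ) :
    exponentialPDFReal r x = if 0 ≤ x then r * exp (-(r * x)) else 0 := by
  simp [exponentialPDFReal, gammaPDFReal]

theorem hasIntegral_pow_mul_exponentialPDFReal {r : ℝ} (hr : 0 < r) (m : ℕ) :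
    HasIntegral volume (fun t => t ^ m * exponentialPDFReal r t) (m ! / r ^ m) := by
  have hGamma : ∫ t in Ioi 0, t ^ m * exp (-(r * t)) = m ! / r ^ (m + 1) := by
    have h := integral_rpow_mul_exp_neg_mul_Ioi (a := m + 1) (by positivity) hr
    simp only [add_sub_cancel_right, rpow_natCast] at h
    rw [← Nat.cast_add_one, rpow_natCast, Nat.cast_add_one, Gamma_nat_eq_factorial] at h
    rw [h, one_div_pow]
    ring
  have hInt : IntegrableOn (fun t : ℝ => t ^ m * exp (-(r * t))) (Ioi 0) :=
    .of_integral_ne_zero (by rw [hGamma]; positivity)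
  have hfun : (fun t => t ^ m * exponentialPDFReal r t)
      = (Ici 0).indicator fun t => r * (t ^ m * exp (-(r * t))) := by
    ext t
    by_cases ht : 0 ≤ t <;> simp [exponentialPDFReal_eq, ht, indicator]; ring
  rw [hfun, HasIntegral, integrable_indicator_iff measurableSet_Ici, integral_indicator measurableSet_Ici,
    integrableOn_Ici_iff_integrableOn_Ioi, integral_Ici_eq_integral_Ioi, integral_const_mul, hGamma]
  refine ⟨hInt.const_mul r, ?_⟩
  field_simp
  ring

noncomputable def iidExponentialPDF {ι : Type*} [Fintype ι] (r : ℝ) (y : ι → ℝ) : ℝ :=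
  ∏ i, exponentialPDFReal r (y i)

theorem iidExponentialPDF_of_nonneg {ι : Type*} [Fintype ι] (r : ℝ) {y : ι → ℝ}
    (hy : ∀ i, 0 ≤ y i) :
    iidExponentialPDF r y = r ^ Fintype.card ι * exp (-(r * ∑ i, y i)) := by
  simp only [iidExponentialPDF, exponentialPDFReal_eq, hy, if_true, Finset.prod_mul_distrib,
    Finset.prod_const, Finset.card_univ, ← exp_sum, Finset.mul_sum, Finset.sum_neg_distrib]

theorem iidExponentialPDF_eq_zero {ι : Type*} [Fintype ι] (r : ℝ) {y : ι → ℝ} {i : ι}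
    (hi : y i < 0) : iidExponentialPDF r y = 0 :=
  Finset.prod_eq_zero (Finset.mem_univ i) (by simp [exponentialPDFReal_eq, not_le.2 hi])

theorem iidExponentialPDF_fin_succ {n : ℕ} (r : ℝ) (y : Fin (n + 1) → ℝ) :
    iidExponentialPDF r y = exponentialPDFReal r (y 0) * iidExponentialPDF r (Fin.tail y) :=
  Fin.prod_univ_succ _

section Moments

variable {ζ : ℝ}

theorem hasIntegral_iidExponentialPDF {ι : Type*} [Fintype ι] (hζ : 0 < ζ) :
    HasIntegral volume (iidExponentialPDF (ι := ι) ζ) 1 := by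
  have h := hasIntegral_pow_mul_exponentialPDFReal hζ 0
  simp only [pow_zero, one_mul, Nat.factorial_zero, Nat.cast_one, div_one] at h
  refine ⟨Integrable.fintype_prod fun _ => h.1, ?_⟩
  simp [iidExponentialPDF, integral_fintype_prod_volume_eq_prod, h.2]

theorem hasIntegral_sum_mul_iidExponentialPDF (hζ : 0 < ζ) (n : ℕ) :
    HasIntegral volume (fun y : Fin n → ℝ => (∑ i, y i) * iidExponentialPDF ζ y) (n / ζ) := by
  induction n with
  | zero => exact (hasIntegral_iidExponentialPDF hζ).const_mul 0 |>.congr (by simp) (by simp)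
  | succ n ih =>
    refine (((hasIntegral_pow_mul_exponentialPDFReal hζ 1).fin_cons_mul
      (hasIntegral_iidExponentialPDF hζ)).add
      ((hasIntegral_pow_mul_exponentialPDFReal hζ 0).fin_cons_mul ih)).congr (fun y => ?_) ?_
    · simp only [iidExponentialPDF_fin_succ, Fin.sum_univ_succ, Fin.tail]
      ring
    · push_cast
      ring

theorem hasIntegral_sq_sum_mul_iidExponentialPDF (hζ : 0 < ζ) (n : ℕ) :
    HasIntegral volume (fun y : Fin n → ℝ => (∑ i, y i) ^ 2 * iidExponentialPDF ζ y)
      (n * (n + 1) / ζ ^ 2) := by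
  induction n with
  | zero => exact (hasIntegral_iidExponentialPDF hζ).const_mul 0 |>.congr (by simp) (by simp)
  | succ n ih =>
    refine ((((hasIntegral_pow_mul_exponentialPDFReal hζ 2).fin_cons_mul
      (hasIntegral_iidExponentialPDF hζ)).add
      (((hasIntegral_pow_mul_exponentialPDFReal hζ 1).fin_cons_mul
        (hasIntegral_sum_mul_iidExponentialPDF hζ n)).const_mul 2)).add
      ((hasIntegral_pow_mul_exponentialPDFReal hζ 0).fin_cons_mul ih)).congr (fun y => ?_) ?_
    · simp only [iidExponentialPDF_fin_succ, Fin.sum_univ_succ, Fin.tail]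
      ring
    · push_cast [Nat.factorial]
      field_simp
      ring

theorem hasIntegral_cube_sum_mul_iidExponentialPDF (hζ : 0 < ζ) (n : ℕ) :
    HasIntegral volume (fun y : Fin n → ℝ => (∑ i, y i) ^ 3 * iidExponentialPDF ζ y)
      (n * (n + 1) * (n + 2) / ζ ^ 3) := by
  induction n with
  | zero => exact (hasIntegral_iidExponentialPDF hζ).const_mul 0 |>.congr (by simp) (by simp)
  | succ n ih =>
    refine (((((hasIntegral_pow_mul_exponentialPDFReal hζ 3).fin_cons_mul
      (hasIntegral_iidExponentialPDF hζ)).add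
      (((hasIntegral_pow_mul_exponentialPDFReal hζ 2).fin_cons_mul
        (hasIntegral_sum_mul_iidExponentialPDF hζ n)).const_mul 3)).add
      (((hasIntegral_pow_mul_exponentialPDFReal hζ 1).fin_cons_mul
        (hasIntegral_sq_sum_mul_iidExponentialPDF hζ n)).const_mul 3)).add
      ((hasIntegral_pow_mul_exponentialPDFReal hζ 0).fin_cons_mul ih)).congr (fun y => ?_) ?_
    · simp only [iidExponentialPDF_fin_succ, Fin.sum_univ_succ, Fin.tail]
      ring
    · push_cast [Nat.factorial]
      field_simp
      ring

theorem hasIntegral_sum_sq_mul_iidExponentialPDF (hζ : 0 < ζ) (n : ℕ) :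
    HasIntegral volume (fun y : Fin n → ℝ => (∑ i, y i ^ 2) * iidExponentialPDF ζ y)
      (2 * n / ζ ^ 2) := by
  induction n with
  | zero => exact (hasIntegral_iidExponentialPDF hζ).const_mul 0 |>.congr (by simp) (by simp)
  | succ n ih =>
    refine (((hasIntegral_pow_mul_exponentialPDFReal hζ 2).fin_cons_mul
      (hasIntegral_iidExponentialPDF hζ)).add
      ((hasIntegral_pow_mul_exponentialPDFReal hζ 0).fin_cons_mul ih)).congr (fun y => ?_) ?_
    · simp only [iidExponentialPDF_fin_succ, Fin.sum_univ_succ, Fin.tail]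
      ring
    · push_cast [Nat.factorial]
      field_simp
      ring

theorem hasIntegral_sum_mul_sum_sq_mul_iidExponentialPDF (hζ : 0 < ζ) (n : ℕ) :
    HasIntegral volume
      (fun y : Fin n → ℝ => (∑ i, y i) * (∑ i, y i ^ 2) * iidExponentialPDF ζ y)
      (2 * n * (n + 2) / ζ ^ 3) := by
  induction n with
  | zero => exact (hasIntegral_iidExponentialPDF hζ).const_mul 0 |>.congr (by simp) (by simp)
  | succ n ih =>
    refine (((((hasIntegral_pow_mul_exponentialPDFReal hζ 3).fin_cons_mul
      (hasIntegral_iidExponentialPDF hζ)).add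
      ((hasIntegral_pow_mul_exponentialPDFReal hζ 1).fin_cons_mul
        (hasIntegral_sum_sq_mul_iidExponentialPDF hζ n))).add
      ((hasIntegral_pow_mul_exponentialPDFReal hζ 2).fin_cons_mul
        (hasIntegral_sum_mul_iidExponentialPDF hζ n))).add
      ((hasIntegral_pow_mul_exponentialPDFReal hζ 0).fin_cons_mul ih)).congr (fun y => ?_) ?_
    · simp only [iidExponentialPDF_fin_succ, Fin.sum_univ_succ, Fin.tail]
      ring
    · push_cast [Nat.factorial]
      field_simp
      ring

end Moments

theorem hasIntegral_centered_mul_iidExponentialPDF {ζ : ℝ} (hζ : 0 < ζ) (n : ℕ) (A B C D : ℝ) :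
    HasIntegral volume
      (fun y : Fin n → ℝ => (n - ζ * ∑ i, y i) *
        (A * ∑ i, y i ^ 2 + B * (∑ i, y i) ^ 2 + C * ∑ i, y i + D) * iidExponentialPDF ζ y)
      (-(4 * n * A + 2 * n * (n + 1) * B) / ζ ^ 2 - n * C / ζ) := by
  have hQ := hasIntegral_sum_sq_mul_iidExponentialPDF hζ n
  have hSQ := hasIntegral_sum_mul_sum_sq_mul_iidExponentialPDF hζ n
  have hS2 := hasIntegral_sq_sum_mul_iidExponentialPDF hζ n
  have hS3 := hasIntegral_cube_sum_mul_iidExponentialPDF hζ n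
  have hS := hasIntegral_sum_mul_iidExponentialPDF hζ n
  have h1 := hasIntegral_iidExponentialPDF (ι := Fin n) hζ
  refine ((((((hQ.const_mul (n * A)).sub (hSQ.const_mul (ζ * A))).add
    (hS2.const_mul (n * B - ζ * C))).sub (hS3.const_mul (ζ * B))).add
    (hS.const_mul (n * C - ζ * D))).add (h1.const_mul (n * D))).congr (fun y => by ring) ?_
  field_simp
  ring

theorem sum_sum_ite_sub_mul_mul {ι : Type*} [Fintype ι] [DecidableEq ι] (c : ℝ) (y : ι → ℝ) :
    ∑ i, ∑ j, ((if i = j then (1 : ℝ) else 0) - c) * y i * y j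
      = ∑ i, y i ^ 2 - c * (∑ i, y i) ^ 2 := by
  simp only [sub_mul, Finset.sum_sub_distrib, ite_mul, one_mul, zero_mul, Finset.sum_ite_eq,
    Finset.mem_univ, if_true, sq, Finset.sum_mul, Finset.mul_sum, mul_assoc]
  rw [Finset.sum_comm]

theorem mul_self_sqrt_mul_exp_eq_pdf {ι : Type*} [Fintype ι] {β ζ x : ℝ} {y : ι → ℝ}
    (hβ : 0 < β) (hζ : 0 < ζ) (hx : 0 ≤ x) (hy : ∀ i, 0 ≤ y i) :
    let u := √(β * ζ ^ Fintype.card ι) * exp (-(β * x + ζ * ∑ i, y i) / 2)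
    u * u = exponentialPDFReal β x * iidExponentialPDF ζ y := by
  rw [iidExponentialPDF_of_nonneg ζ hy, exponentialPDFReal_eq, if_pos hx]
  calc _ = (√(β * ζ ^ Fintype.card ι) * √(β * ζ ^ Fintype.card ι)) *
        exp (-(β * x + ζ * ∑ i, y i) / 2 + -(β * x + ζ * ∑ i, y i) / 2) := by
        rw [exp_add]; ring
    _ = β * ζ ^ Fintype.card ι * exp (-(β * x) + -(ζ * ∑ i, y i)) := by
        rw [mul_self_sqrt (by positivity), add_halves, neg_add]
    _ = _ := by rw [exp_add]; ring

theorem stmt14_general (n : ℕ) (β ζ a₀ b₀ r l ρ : ℝ) (hβ : 0 < β) (hζ : 0 < ζ) :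
    let ψ : ℝ × (Fin n → ℝ) → ℝ := fun p =>
      Real.sqrt (β * ζ ^ n) * Real.exp (-(β * p.1 + ζ * ∑ i, p.2 i) / 2)
    let F : ℝ × (Fin n → ℝ) → ℝ := fun p =>
      ((1 / 8) * a₀ ^ 2 * ζ ^ 2 *
          (∑ i, ∑ j, ((if i = j then (1 : ℝ) else 0) - ρ ^ 2) * p.2 i * p.2 j) +
        (1 / 2) * (l * ρ * a₀ - b₀) * ζ * (∑ i, p.2 i) -
        (1 / 2) * r * β * p.1 - l ^ 2 / 2) * ψ p
    let S : Set (ℝ × (Fin n → ℝ)) := {p | 0 ≤ p.1 ∧ ∀ i, 0 ≤ p.2 i}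
    (∫ p in S, (1 / 2) * ((n : ℝ) - ζ * ∑ i, p.2 i) * ψ p * F p) =
      (n / 4) * (b₀ - a₀ * ρ * l + a₀ ^ 2 * ((n + 1) * ρ ^ 2 / 2 - 1)) := by
  intro ψ F S
  -- `F / (2ψ) = (a₀²ζ²/16) (Q - ρ²S²) + ((lρa₀ - b₀)ζ/4) S - l²/4 - (rβ/4) x`
  have h := ((hasIntegral_pow_mul_exponentialPDFReal hβ 0).prod_mul
    (hasIntegral_centered_mul_iidExponentialPDF hζ n (a₀ ^ 2 * ζ ^ 2 / 16)
      (-(a₀ ^ 2 * ζ ^ 2 * ρ ^ 2 / 16)) ((l * ρ * a₀ - b₀) * ζ / 4) (-(l ^ 2 / 4)))).add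
    ((hasIntegral_pow_mul_exponentialPDFReal hβ 1).prod_mul
      (hasIntegral_centered_mul_iidExponentialPDF hζ n 0 0 0 (-(r * β / 4))))
  rw [← Measure.volume_eq_prod] at h
  refine (setIntegral_congr_fun (by measurability) fun p hp => ?_).trans <|
    (setIntegral_eq_integral_of_forall_compl_eq_zero fun p hp => ?_).trans <| h.2.trans ?_
  · have hψ := mul_self_sqrt_mul_exp_eq_pdf hβ hζ hp.1 hp.2
    rw [Fintype.card_fin] at hψ
    simp only [F]
    rw [mul_mul_mul_comm, hψ, sum_sum_ite_sub_mul_mul]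
    ring
  · simp only [S, Set.mem_ofPred_eq, not_and_or, not_le, not_forall] at hp
    rcases hp with hx | ⟨i, hi⟩
    · simp [exponentialPDFReal_eq, hx.not_ge]
    · simp [iidExponentialPDF_eq_zero ζ hi]
  · field_simp
    ring

/-- ⟨½(n - ζ∑y_i)ψ, F⟩ = (n/4)[b₀ - a₀ρλ + a₀²((n+1)ρ²/2 - 1)]. -/
theorem stmt14 (n : ℕ) (hn : 1 ≤ n) (β ζ a₀ b₀ r l ρ : ℝ) (hβ : 0 < β) (hζ : 0 < ζ) :
    let ψ : ℝ × (Fin n → ℝ) → ℝ := fun p =>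
      Real.sqrt (β * ζ ^ n) * Real.exp (-(β * p.1 + ζ * ∑ i, p.2 i) / 2)
    let F : ℝ × (Fin n → ℝ) → ℝ := fun p =>
      ((1 / 8) * a₀ ^ 2 * ζ ^ 2 *
          (∑ i, ∑ j, ((if i = j then (1 : ℝ) else 0) - ρ ^ 2) * p.2 i * p.2 j) +
        (1 / 2) * (l * ρ * a₀ - b₀) * ζ * (∑ i, p.2 i) -
        (1 / 2) * r * β * p.1 - l ^ 2 / 2) * ψ p
    let S : Set (ℝ × (Fin n → ℝ)) := {p | 0 ≤ p.1 ∧ ∀ i, 0 ≤ p.2 i}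
    (∫ p in S, (1 / 2) * ((n : ℝ) - ζ * ∑ i, p.2 i) * ψ p * F p) =
      (n / 4) * (b₀ - a₀ * ρ * l + a₀ ^ 2 * ((n + 1) * ρ ^ 2 / 2 - 1)) :=
  stmt14_general n β ζ a₀ b₀ r l ρ hβ hζ
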